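/- arXiv:2204.08969 — 2 statements merged into one kernel-verified Lean document; each statement's English description precedes it below -/
import Mathlib

section
/- Let Ω be a simply connected topological space and 𝒰 a covering of Ω by path-connected open sets. For each U ∈ 𝒰 let f_U : U → ℝ be a function, and suppose for all U, V ∈ 𝒰 with U ∩ V ≠ ∅, the function f_V − f_U is constant on U ∩ V. Then there exists a function f : Ω → ℝ such that f_U − f is constant on U for every U ∈ 𝒰. -/
/-!
The functions `f U` are glued, along the translations by the constants `f V - f U`, into a
covering space of `Ω` with discrete fibre `ℝ`, whose sheets over `U` are the functions
`f U - c`. As `Ω` is simply connected, monodromy from a base point is path independent and yields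
a global section, whose values form `g`. A path inside a path-connected `U` stays in one sheet
over `U`, so `f U - g` is constant on `U`.
-/

open Bundle

section TranslationBundle

variable {Ω ι : Type*} [TopologicalSpace Ω] (U : ι → Set Ω) (hU : ∀ i, IsOpen (U i))
  (hcover : ∀ x, ∃ i, x ∈ U i) (φ : ι → Ω → ℝ)
  (hφ : ∀ i j, ∃ c, ∀ x ∈ U i ∩ U j, φ j x - φ i x = c)

/-- A point with coordinate `c` in the chart over `U i` stands for the function `φ i - c`. -/
noncomputable def translationBundleCore : FiberBundleCore ι Ω (WithDiscreteTopology ℝ) where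
  baseSet := U
  isOpen_baseSet := hU
  indexAt x := (hcover x).choose
  mem_baseSet_at x := (hcover x).choose_spec
  coordChange i j x v := .toTopology ⊥ (v.ofTopology + (φ j x - φ i x))
  coordChange_self i x _ v := by simp
  continuousOn_coordChange i j := by
    obtain ⟨c, hc⟩ := hφ i j
    have : Continuous fun v : WithDiscreteTopology ℝ ↦
        (.toTopology ⊥ (v.ofTopology + c) : WithDiscreteTopology ℝ) :=
      continuous_of_discreteTopology
    exact (this.comp continuous_snd).continuousOn.congr fun q hq ↦ by simp [hc q.1 hq.1]
  coordChange_comp i j k x _ v := by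
    simp only [WithTopology.toTopology.injEq]
    ring

theorem translationBundleCore_localTriv_snd (i : ι)
    (q : (translationBundleCore U hU hcover φ hφ).TotalSpace) :
    ((translationBundleCore U hU hcover φ hφ).localTriv i q).2.ofTopology =
      q.2.ofTopology + (φ i q.proj - φ ((translationBundleCore U hU hcover φ hφ).indexAt q.proj)
        q.proj) :=
  rfl

end TranslationBundle

namespace IsCoveringMap

variable {E X : Type*} [TopologicalSpace E] [TopologicalSpace X] {p : E → X}

theorem exists_monodromy_invariant_section [SimplyConnectedSpace X] (cov : IsCoveringMap p)
    (e₀ : E) : ∃ σ : ∀ x, p ⁻¹' {x}, ∀ {x y : X} (γ : Path.Homotopic.Quotient x y),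
      cov.monodromy γ (σ x) = σ y := by
  refine ⟨fun x ↦ cov.monodromy (.mk (PathConnectedSpace.somePath (p e₀) x)) ⟨e₀, rfl⟩,
    fun γ ↦ ?_⟩
  rw [← monodromy_trans_apply]
  exact congr_arg (cov.monodromy · _) (Subsingleton.elim _ _)

theorem snd_monodromy_eq_of_mem_baseSet {F : Type*} [TopologicalSpace F] (cov : IsCoveringMap p)
    (t : Trivialization F p) {x y : X} (γ : Path x y) (hγ : ∀ s, γ s ∈ t.baseSet)
    (e : p ⁻¹' {x}) : (t (cov.monodromy (.mk γ) e)).2 = (t e).2 := by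
  obtain ⟨e, rfl : p e = x⟩ := e
  have hlift := (cov.eq_liftPath_iff (γ := γ) (e := e) γ.source
    (Γ := fun s ↦ t.toOpenPartialHomeomorph.symm (γ s, (t e).2))).mpr ⟨?_, ?_, ?_⟩
  · change (t (cov.liftPath γ e _ 1)).2 = _
    rw [← hlift, t.apply_symm_apply' (hγ 1)]
  · exact continuous_iff_continuousAt.mpr fun s ↦
      (t.continuousAt_symm_prodMk_left (hγ s)).comp γ.continuous.continuousAt
  · exact funext fun s ↦ t.proj_symm_apply' (hγ s)
  · simpa using t.symm_apply_mk_proj (t.mem_source.mpr (γ.source ▸ hγ 0))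

end IsCoveringMap

theorem stmt_1 {Ω : Type*} [TopologicalSpace Ω] [SimplyConnectedSpace Ω]
    (𝒰 : Set (Set Ω)) (hopen : ∀ U ∈ 𝒰, IsOpen U) (hpc : ∀ U ∈ 𝒰, IsPathConnected U)
    (hcover : ⋃₀ 𝒰 = Set.univ)
    (f : Set Ω → Ω → ℝ)
    (hconst : ∀ U ∈ 𝒰, ∀ V ∈ 𝒰, (U ∩ V).Nonempty →
      ∃ c : ℝ, ∀ x ∈ U ∩ V, f V x - f U x = c) :
    ∃ g : Ω → ℝ, ∀ U ∈ 𝒰, ∃ c : ℝ, ∀ x ∈ U, f U x - g x = c := by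
  have hmem (x : Ω) : ∃ U : 𝒰, x ∈ (U : Set Ω) := by
    obtain ⟨U, hU, hx⟩ := Set.mem_sUnion.mp (hcover.symm ▸ Set.mem_univ x)
    exact ⟨⟨U, hU⟩, hx⟩
  have hdiff (U V : 𝒰) : ∃ c, ∀ x ∈ (U : Set Ω) ∩ V, f V x - f U x = c := by
    rcases (U.1 ∩ V.1).eq_empty_or_nonempty with h | h
    · exact ⟨0, by simp [h]⟩
    · exact hconst U U.2 V V.2 h
  set Z := translationBundleCore (fun U : 𝒰 ↦ (U : Set Ω)) (fun U ↦ hopen U U.2) hmem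
    (fun U ↦ f U) hdiff
  have cov : IsCoveringMap Z.proj := FiberBundle.isCoveringMap (F := WithDiscreteTopology ℝ)
  obtain ⟨x₀⟩ := (inferInstance : Nonempty Ω)
  obtain ⟨σ, hσ⟩ := cov.exists_monodromy_invariant_section ⟨x₀, .toTopology ⊥ 0⟩
  refine ⟨fun y ↦ f (Z.indexAt y) y - (σ y).1.2.ofTopology, fun U hU ↦ ?_⟩
  obtain ⟨x₁, -, hjoin⟩ := hpc U hU
  refine ⟨(Z.localTriv ⟨U, hU⟩ (σ x₁)).2.ofTopology, fun y hy ↦ ?_⟩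
  have hsheet := cov.snd_monodromy_eq_of_mem_baseSet (Z.localTriv ⟨U, hU⟩) (hjoin hy).somePath
    (hjoin hy).somePath_mem (σ x₁)
  have hproj : (σ y).1.proj = y := (σ y).2
  rw [hσ] at hsheet
  rw [← hsheet, translationBundleCore_localTriv_snd]
  dsimp only
  rw [hproj]
  ring
end

section
/- Let Ω be a topological space, 𝒰 an open covering, d a coupling satisfying the cocycle conditions, and Γ : [0,1]² → Ω a continuous homotopy with fixed endpoints Γ(0,·) = x₀ and Γ(1,·) = x. For each s ∈ [0,1] define C(s) as the sum Σ_{k=0}^{n} d_{U_k U_{k+1}} over any admissible subdivision-and-cover of the path Γ(·,s) (with fixed initial set U_0 ∋ x₀ and final set U_{n+1} = U ∋ x), which is well-defined independent of the choices. Then s ↦ C(s) is locally constant, hence constant on [0,1]; in particular the value associated with Γ(·,0) equals that associated with Γ(·,1). -/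
/-!
Fix a parameter `s`. By the Lebesgue number lemma, a fine enough uniform subdivision of `[0,1]`
has every piece of the path `Γ(·,s)` inside a single set of the cover, and by the tube lemma each
piece `[t_k, t_{k+1}] × {s}` stays inside that set for all parameters near `s`. So the same
admissible subdivision-and-cover serves all nearby paths, which makes `C` locally constant, hence
constant on the connected space `[0,1]`.
-/

open Set Filter Topology unitInterval

/-- `k / n`, truncated to `1` for `k ≥ n`. -/
noncomputable def uniformSubdivision (n : ℕ) : ℕ → I := Icc.addNSMul zero_le_one (1 / n : ℝ)

section UniformSubdivision

variable {n k : ℕ}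

lemma coe_uniformSubdivision (hk : k ≤ n) : (uniformSubdivision n k : ℝ) = k / n := by
  have hmem : (k / n : ℝ) ∈ I :=
    ⟨by positivity, div_le_one_of_le₀ (mod_cast hk) n.cast_nonneg⟩
  rw [uniformSubdivision, Icc.addNSMul, zero_add, nsmul_eq_mul, mul_one_div, projIcc_of_mem _ hmem]

lemma uniformSubdivision_zero : uniformSubdivision n 0 = 0 :=
  Subtype.ext (Icc.addNSMul_zero _)

lemma uniformSubdivision_self (hn : 0 < n) : uniformSubdivision n n = 1 := by
  ext
  rw [coe_uniformSubdivision le_rfl, div_self (by positivity)]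
  rfl

lemma uniformSubdivision_lt_succ (hk : k < n) :
    uniformSubdivision n k < uniformSubdivision n (k + 1) := by
  rw [← Subtype.coe_lt_coe, coe_uniformSubdivision hk.le, coe_uniformSubdivision hk]
  gcongr
  · exact_mod_cast (k.zero_le.trans_lt hk)
  · exact k.lt_succ_self

lemma exists_uniformSubdivision_Icc_subset {ι : Type*} {c : ι → Set I} (hc₁ : ∀ i, IsOpen (c i))
    (hc₂ : univ ⊆ ⋃ i, c i) :
    ∃ n > 0, ∀ k, ∃ i, Icc (uniformSubdivision n k) (uniformSubdivision n (k + 1)) ⊆ c i := by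
  obtain ⟨δ, hδ, ball_subset⟩ := lebesgue_number_lemma_of_metric isCompact_univ hc₁ hc₂
  obtain ⟨n, hn⟩ := exists_nat_one_div_lt hδ
  refine ⟨n + 1, n.succ_pos, fun k => ?_⟩
  obtain ⟨i, hsub⟩ := ball_subset (uniformSubdivision (n + 1) k) trivial
  refine ⟨i, fun r hr => hsub ?_⟩
  have hmesh :=
    Icc.abs_sub_addNSMul_le zero_le_one (δ := (1 / (n + 1 : ℕ) : ℝ)) (by positivity) k hr
  exact hmesh.trans_lt (by exact_mod_cast hn)

end UniformSubdivision

lemma IsCompact.eventually_forall_apply_mem {X Y Z : Type*} [TopologicalSpace X]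
    [TopologicalSpace Y] [TopologicalSpace Z] {f : X × Y → Z} (hf : Continuous f) {K : Set X}
    (hK : IsCompact K) {W : Set Z} (hW : IsOpen W) {y : Y} (h : ∀ x ∈ K, f (x, y) ∈ W) :
    ∀ᶠ y' in 𝓝 y, ∀ x ∈ K, f (x, y') ∈ W :=
  hK.eventually_forall_of_forall_eventually fun x hx =>
    (hf.comp continuous_swap).continuousAt.preimage_mem_nhds (hW.mem_nhds (h x hx))

lemma exists_uniformSubdivision_eventually_mem {Y Ω : Type*} [TopologicalSpace Y]
    [TopologicalSpace Ω] {𝒰 : Set (Set Ω)} (hopen : ∀ U ∈ 𝒰, IsOpen U) (hcover : ⋃₀ 𝒰 = univ)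
    {Γ : I × Y → Ω} (hΓ : Continuous Γ) (s : Y) :
    ∃ n > 0, ∃ W : ℕ → Set Ω, (∀ k, W k ∈ 𝒰) ∧ ∀ᶠ s' in 𝓝 s, ∀ k < n,
      ∀ r ∈ Icc (uniformSubdivision n k) (uniformSubdivision n (k + 1)), Γ (r, s') ∈ W k := by
  have hpath : Continuous fun r => Γ (r, s) := hΓ.comp (continuous_id.prodMk continuous_const)
  obtain ⟨n, hn, hsub⟩ := exists_uniformSubdivision_Icc_subset
    (c := fun W : 𝒰 => (fun r => Γ (r, s)) ⁻¹' W) (fun W => (hopen W W.2).preimage hpath)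
    (fun r _ => by
      obtain ⟨W, hW, hrW⟩ : Γ (r, s) ∈ ⋃₀ 𝒰 := hcover ▸ mem_univ _
      exact mem_iUnion.2 ⟨⟨W, hW⟩, hrW⟩)
  choose W hW using hsub
  refine ⟨n, hn, fun k => W k, fun k => (W k).2, ?_⟩
  have hnear : ∀ k, ∀ᶠ s' in 𝓝 s, ∀ r ∈ Icc (uniformSubdivision n k)
      (uniformSubdivision n (k + 1)), Γ (r, s') ∈ (W k : Set Ω) :=
    fun k => isCompact_Icc.eventually_forall_apply_mem hΓ (hopen _ (W k).2) (hW k)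
  filter_upwards [(eventually_all_finset (Finset.range n)).2 fun k _ => hnear k] with s' hs' k hkn
  exact hs' k (Finset.mem_range.2 hkn)

theorem stmt_8_general {Ω : Type*} [TopologicalSpace Ω]
    (𝒰 : Set (Set Ω)) (hopen : ∀ U ∈ 𝒰, IsOpen U) (hcover : ⋃₀ 𝒰 = Set.univ)
    (d : Set Ω → Set Ω → ℝ)
    (Γ : unitInterval × unitInterval → Ω) (hΓ : Continuous Γ)
    (U₀ U : Set Ω)
    (C : unitInterval → ℝ)
    -- C s equals the sum over any admissible subdivision-and-cover of Γ(·,s),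
    -- with fixed initial set U₀ and final set U:
    (hCdef : ∀ s : unitInterval, ∀ n : ℕ, 0 < n →
      ∀ t : ℕ → unitInterval, ∀ V : ℕ → Set Ω,
      t 0 = 0 → t n = 1 → (∀ k < n, t k < t (k + 1)) →
      V 0 = U₀ → V (n + 1) = U → (∀ k, 1 ≤ k → k ≤ n → V k ∈ 𝒰) →
      (∀ k, 1 ≤ k → k ≤ n →
        ∀ r : unitInterval, t (k - 1) ≤ r → r ≤ t k → Γ (r, s) ∈ V k) →
      C s = ∑ k ∈ Finset.range (n + 1), d (V k) (V (k + 1))) :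
    ∀ s s' : unitInterval, C s = C s' := by
  suffices hC : IsLocallyConstant C from hC.apply_eq_of_preconnectedSpace
  refine (IsLocallyConstant.iff_eventually_eq C).2 fun s => ?_
  obtain ⟨n, hn, W, hW𝒰, hW⟩ := exists_uniformSubdivision_eventually_mem hopen hcover hΓ s
  let V : ℕ → Set Ω := fun k => if k = 0 then U₀ else if k ≤ n then W (k - 1) else U
  have hV : ∀ k, 1 ≤ k → k ≤ n → V k = W (k - 1) := fun k hk₁ hkn => by
    simp only [V, if_neg (by omega : k ≠ 0), if_pos hkn]
  have hCsum : ∀ s', (∀ k < n, ∀ r ∈ Icc (uniformSubdivision n k)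
      (uniformSubdivision n (k + 1)), Γ (r, s') ∈ W k) →
      C s' = ∑ k ∈ Finset.range (n + 1), d (V k) (V (k + 1)) := fun s' hs' =>
    hCdef s' n hn (uniformSubdivision n) V uniformSubdivision_zero (uniformSubdivision_self hn)
      (fun _ hk => uniformSubdivision_lt_succ hk) (if_pos rfl) (by simp [V])
      (fun k hk₁ hkn => hV k hk₁ hkn ▸ hW𝒰 _)
      (fun k hk₁ hkn r hr₁ hr₂ => by
        obtain ⟨j, rfl⟩ : ∃ j, k = j + 1 := ⟨k - 1, by omega⟩
        rw [hV _ hk₁ hkn]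
        exact hs' j (by omega) r ⟨hr₁, hr₂⟩)
  filter_upwards [hW] with s' hs' using (hCsum s' hs').trans (hCsum s hW.self_of_nhds).symm

theorem stmt_8 {Ω : Type*} [TopologicalSpace Ω]
    (𝒰 : Set (Set Ω)) (hopen : ∀ U ∈ 𝒰, IsOpen U) (hcover : ⋃₀ 𝒰 = Set.univ)
    (d : Set Ω → Set Ω → ℝ)
    (hanti : ∀ U ∈ 𝒰, ∀ V ∈ 𝒰, (U ∩ V).Nonempty → d U V = - d V U)
    (hcoc : ∀ U ∈ 𝒰, ∀ V ∈ 𝒰, ∀ W ∈ 𝒰, (U ∩ V ∩ W).Nonempty → d U W = d U V + d V W)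
    (x₀ x : Ω) (Γ : unitInterval × unitInterval → Ω) (hΓ : Continuous Γ)
    (hΓ0 : ∀ s : unitInterval, Γ (0, s) = x₀)
    (hΓ1 : ∀ s : unitInterval, Γ (1, s) = x)
    (U₀ U : Set Ω) (hU₀ : U₀ ∈ 𝒰) (hU : U ∈ 𝒰) (hx₀ : x₀ ∈ U₀) (hx : x ∈ U)
    (C : unitInterval → ℝ)
    -- C s equals the sum over any admissible subdivision-and-cover of Γ(·,s),
    -- with fixed initial set U₀ and final set U:
    (hCdef : ∀ s : unitInterval, ∀ n : ℕ, 0 < n →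
      ∀ t : ℕ → unitInterval, ∀ V : ℕ → Set Ω,
      t 0 = 0 → t n = 1 → (∀ k < n, t k < t (k + 1)) →
      V 0 = U₀ → V (n + 1) = U → (∀ k, 1 ≤ k → k ≤ n → V k ∈ 𝒰) →
      (∀ k, 1 ≤ k → k ≤ n →
        ∀ r : unitInterval, t (k - 1) ≤ r → r ≤ t k → Γ (r, s) ∈ V k) →
      C s = ∑ k ∈ Finset.range (n + 1), d (V k) (V (k + 1))) :
    ∀ s s' : unitInterval, C s = C s' :=
  stmt_8_general 𝒰 hopen hcover d Γ hΓ U₀ U C hCdef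
end
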